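/- For λ_c, λ_d, c_s > 0, the second derivative of V(b) = (c_s + M_d(b))/((λ_d/(λ_c+λ_d))(1 − e^{−(λ_d+λ_c)b})) at its unique critical point b* > 0 is nonnegative, so b* is the global minimizer of V on (0, ∞). -/

import Mathlib

open Real Filter Topology

/-!
With `s = λ_c + λ_d` and `K = c_s s / λ_d` one has `V(b) = (K + b) / (1 - e^{-s b}) - 1 / s`, and the
critical equation reads `e^{-s b⋆} (1 + s (K + b⋆)) = 1`. This says exactly that the numerator of
`V'` vanishes at `b⋆`, so `V''(b⋆)` is the derivative of that numerator over a square; it also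
gives `V(b⋆) = K + b⋆`, and the tangent-line bound `1 + x ≤ eˣ` at `x = s (b⋆ - b)` then yields
`V(b⋆) ≤ V(b)`.
-/

noncomputable def expRatio (K s b : ℝ) : ℝ := (K + b) / (1 - exp (-(s * b)))

section expRatio

variable {K s b : ℝ}

lemma one_sub_exp_neg_mul_ne_zero (hs : s ≠ 0) (hb : b ≠ 0) : 1 - exp (-(s * b)) ≠ 0 := by
  rw [sub_ne_zero, ne_comm, Ne, exp_eq_one_iff, neg_eq_zero]
  exact mul_ne_zero hs hb

lemma div_eq_expRatio_sub {c d : ℝ} (hs : s ≠ 0) (hd : d ≠ 0) (hb : b ≠ 0) :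
    (c + d / s * (b - (1 - exp (-(s * b))) / s)) / (d / s * (1 - exp (-(s * b)))) =
      expRatio (c * s / d) s b - 1 / s := by
  rw [expRatio]
  field_simp [one_sub_exp_neg_mul_ne_zero hs hb]
  ring

lemma one_sub_exp_neg_mul_pos (hs : 0 < s) (hb : 0 < b) : 0 < 1 - exp (-(s * b)) := by
  rw [sub_pos, exp_lt_one_iff, neg_lt_zero]
  exact mul_pos hs hb

lemma hasDerivAt_exp_neg_mul (s b : ℝ) :
    HasDerivAt (fun x => exp (-(s * x))) (-s * exp (-(s * b))) b := by
  simpa [mul_comm] using ((hasDerivAt_id b).const_mul s).neg.exp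

lemma hasDerivAt_expRatio (hs : s ≠ 0) (hb : b ≠ 0) :
    HasDerivAt (expRatio K s)
      ((1 - exp (-(s * b)) * (1 + s * (K + b))) / (1 - exp (-(s * b))) ^ 2) b := by
  have hnum : HasDerivAt (fun x => K + x) 1 b := (hasDerivAt_id' b).const_add K
  have hden := (hasDerivAt_exp_neg_mul s b).const_sub 1
  exact (hnum.fun_div hden (one_sub_exp_neg_mul_ne_zero hs hb)).congr_deriv (by ring)

lemma hasDerivAt_one_sub_exp_neg_mul_mul (K s b : ℝ) :
    HasDerivAt (fun x => 1 - exp (-(s * x)) * (1 + s * (K + x)))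
      (s ^ 2 * (K + b) * exp (-(s * b))) b := by
  have h := (hasDerivAt_exp_neg_mul s b).fun_mul
    (((hasDerivAt_id' b).const_add K).const_mul s |>.const_add 1)
  exact (h.const_sub 1).congr_deriv (by ring)

lemma deriv_deriv_expRatio_nonneg (hs : s ≠ 0) (hb : b ≠ 0) (hKb : 0 ≤ K + b)
    (hcrit : exp (-(s * b)) * (1 + s * (K + b)) = 1) :
    0 ≤ deriv (deriv (expRatio K s)) b := by
  have hderiv : deriv (expRatio K s) =ᶠ[𝓝 b]
      fun x => (1 - exp (-(s * x)) * (1 + s * (K + x))) / (1 - exp (-(s * x))) ^ 2 := by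
    filter_upwards [isOpen_ne.mem_nhds hb] with x hx
    exact (hasDerivAt_expRatio hs hx).deriv
  have hD := one_sub_exp_neg_mul_ne_zero hs hb
  have hquot := (hasDerivAt_one_sub_exp_neg_mul_mul K s b).fun_div
    (((hasDerivAt_exp_neg_mul s b).const_sub 1).fun_pow 2) (pow_ne_zero 2 hD)
  rw [hderiv.deriv_eq, hquot.deriv, hcrit, sub_self, zero_mul, sub_zero]
  positivity

lemma expRatio_of_crit (hs : s ≠ 0) (hb : b ≠ 0)
    (hcrit : exp (-(s * b)) * (1 + s * (K + b)) = 1) :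
    expRatio K s b = K + b + 1 / s := by
  have hD := one_sub_exp_neg_mul_ne_zero hs hb
  rw [expRatio, div_eq_iff hD]
  field_simp
  rw [mul_comm b s]
  linear_combination hcrit

lemma expRatio_le_of_crit {bstar : ℝ} (hs : 0 < s) (hbstar : bstar ≠ 0) (hb : 0 < b)
    (hcrit : exp (-(s * bstar)) * (1 + s * (K + bstar)) = 1) :
    expRatio K s bstar ≤ expRatio K s b := by
  have hD := one_sub_exp_neg_mul_pos hs hb
  have htangent : exp (-(s * bstar)) * (1 - s * (b - bstar)) ≤ exp (-(s * b)) := by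
    have h := add_one_le_exp (-(s * (b - bstar)))
    calc exp (-(s * bstar)) * (1 - s * (b - bstar))
        ≤ exp (-(s * bstar)) * exp (-(s * (b - bstar))) := by gcongr; linarith
      _ = exp (-(s * b)) := by rw [← exp_add]; ring_nf
  rw [expRatio_of_crit hs.ne' hbstar hcrit, expRatio, le_div_iff₀ hD]
  have hpos : 0 < 1 + s * (K + bstar) :=
    (pos_iff_pos_of_mul_pos (hcrit ▸ one_pos)).mp (exp_pos _)
  field_simp
  linear_combination mul_le_mul_of_nonneg_left htangent hpos.le - (1 - s * (b - bstar)) * hcrit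

end expRatio

theorem stmt_19 (lc ld cs : ℝ) (hlc : 0 < lc) (hld : 0 < ld) (hcs : 0 < cs)
    (V : ℝ → ℝ)
    (hV : ∀ b, V b =
      (cs + (ld / (ld + lc)) * (b - (1 - Real.exp (-(ld + lc) * b)) / (lc + ld))) /
        ((ld / (lc + ld)) * (1 - Real.exp (-(ld + lc) * b))))
    (bstar : ℝ) (hb : 0 < bstar)
    (hcrit : Real.exp (-(lc + ld) * bstar) *
      (1 + (cs / ld) * (lc + ld) ^ 2 + bstar * (lc + ld)) = 1) :
    0 ≤ deriv (deriv V) bstar ∧ ∀ b > (0 : ℝ), V bstar ≤ V b := by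
  have hs : 0 < lc + ld := by positivity
  have hVeq : ∀ b ≠ 0,
      V b = expRatio (cs * (lc + ld) / ld) (lc + ld) b - 1 / (lc + ld) := by
    intro b hb0
    rw [hV, add_comm ld lc, neg_mul]
    exact div_eq_expRatio_sub hs.ne' hld.ne' hb0
  have hcrit_s : exp (-((lc + ld) * bstar)) *
      (1 + (lc + ld) * (cs * (lc + ld) / ld + bstar)) = 1 := by
    rw [← neg_mul]
    convert hcrit using 2
    field_simp
    ring
  refine ⟨?_, fun b hb' => ?_⟩
  · have hloc : V =ᶠ[𝓝 bstar]
        fun b => expRatio (cs * (lc + ld) / ld) (lc + ld) b - 1 / (lc + ld) :=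
      eventually_of_mem (isOpen_ne.mem_nhds hb.ne') hVeq
    rw [hloc.deriv.deriv_eq, deriv_sub_const_fun]
    exact deriv_deriv_expRatio_nonneg hs.ne' hb.ne' (by positivity) hcrit_s
  · rw [hVeq _ hb.ne', hVeq _ hb'.ne']
    linarith [expRatio_le_of_crit hs hb.ne' hb' hcrit_s]
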